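/- Let q ≥ 2 be the alphabet size and R(n) the number of rich words of length n over the alphabet. Suppose τ : ℕ → ℕ is a function such that every rich word w of length n has UPS-factorization length LUF(w) ≤ τ(n). Then for all n ≥ 2, R(n) ≤ ∑_{p=1}^{τ(n)} ∑_{n₁+⋯+n_p=n, n_i ≥ 1} R(⌈n₁/2⌉)·R(⌈n₂/2⌉)⋯R(⌈n_p/2⌉). -/

import Mathlib

/-- The set of palindromic factors of a word `w` (including the empty word). -/
def palFactors {α : Type*} [DecidableEq α] (w : List α) : Finset (List α) :=
  ((w.inits.flatMap List.tails).filter fun u => u.reverse = u).toFinset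

/-- A word is rich if it has `|w| + 1` distinct palindromic factors
(including the empty word). -/
def Rich {α : Type*} [DecidableEq α] (w : List α) : Prop :=
  (palFactors w).card = w.length + 1

/-- `s` is the longest palindromic suffix of `u`: a nonempty palindromic suffix of
maximal length. -/
def IsLPS {α : Type*} (u s : List α) : Prop :=
  s ≠ [] ∧ s.reverse = s ∧ s <:+ u ∧
    ∀ t : List α, t <:+ u → t.reverse = t → t.length ≤ s.length

/-- `ws = [w_p, …, w_1]` is a UPS-factorization of `w`: distinct nonempty
palindromes whose concatenation is `w`, where each `w_i` is the longest palindromic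
suffix of `w_p ⋯ w_i`. -/
def UPS {α : Type*} (w : List α) (ws : List (List α)) : Prop :=
  ws ≠ [] ∧ ws.flatten = w ∧ ws.Pairwise (· ≠ ·) ∧
    ∀ i : Fin ws.length, IsLPS ((ws.take (i + 1)).flatten) ws[i]

instance {α : Type*} [DecidableEq α] (w : List α) : Decidable (Rich w) :=
  decidable_of_iff ((palFactors w).card = w.length + 1) Iff.rfl

/-- The number of rich words of length `n` over an alphabet of size `q`. -/
def richCount (q n : ℕ) : ℕ :=
  Fintype.card {w : List.Vector (Fin q) n // Rich w.toList}

/-- Ordered compositions of `n` into `p` positive parts. -/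
def comps (n p : ℕ) : Finset (Fin p → Fin (n + 1)) :=
  Finset.univ.filter fun f => (∀ i, 1 ≤ (f i : ℕ)) ∧ ∑ i, ((f i : ℕ)) = n

/-!
The UPS-factorization is obtained greedily, by splitting off longest palindromic suffixes. Its
factors are distinct because longest palindromic suffixes in a rich word are unioccurrent: the last
letter of a rich word creates exactly one new palindrome, which can only be the longest palindromic
suffix. So a rich word of length `n` has a UPS-factorization with `p ≤ τ n` factors. The number
`p`, the factor lengths `nᵢ` and the first `⌈nᵢ/2⌉` letters of each factor (a rich word, being a
factor of `w`) determine `w`, since a palindrome is determined by its length and its first half.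
This injection bounds `R(n)` by the right-hand side.
-/

section Palindromes

variable {α : Type*}

theorem isPrefix_of_isSuffix_of_palindrome {u v : List α} (hu : u.reverse = u)
    (hv : v.reverse = v) (h : u <:+ v) : u <+: v := by
  simpa only [hu, hv] using List.reverse_prefix.2 h

theorem infix_of_palindrome_isSuffix_of_ne {u v w : List α} {a : α} (hu : u.reverse = u)
    (hv : v.reverse = v) (huv : u <:+ v) (hne : u ≠ v) (hvw : v <:+ w ++ [a]) : u <:+: w := by
  obtain ⟨r, rfl⟩ := isPrefix_of_isSuffix_of_palindrome hu hv huv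
  rcases r.eq_nil_or_concat with rfl | ⟨r, b, rfl⟩
  · exact absurd (List.append_nil u).symm hne
  rw [List.concat_eq_append, ← List.append_assoc, List.suffix_concat_iff] at hvw
  obtain ⟨t, ht, htw⟩ := hvw.resolve_left (by simp)
  rw [← List.append_inj_left' ht rfl] at htw
  exact (List.prefix_append u r).isInfix.trans htw.isInfix

variable [DecidableEq α]

theorem mem_palFactors {u w : List α} : u ∈ palFactors w ↔ u <:+: w ∧ u.reverse = u := by
  simp only [palFactors, List.mem_toFinset, List.mem_filter, List.mem_flatMap, List.mem_inits,
    List.mem_tails, decide_eq_true_eq]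
  constructor
  · rintro ⟨⟨x, hx, hu⟩, hp⟩
    exact ⟨hu.isInfix.trans hx.isInfix, hp⟩
  · rintro ⟨⟨s, t, hst⟩, hp⟩
    exact ⟨⟨s ++ u, ⟨t, hst⟩, ⟨s, rfl⟩⟩, hp⟩

/-- Appending a letter creates at most one new palindromic factor: any new one is a suffix,
and the shorter of two palindromic suffixes already occurs before the last letter. -/
theorem card_palFactors_concat_le (w : List α) (a : α) :
    (palFactors (w ++ [a])).card ≤ (palFactors w).card + 1 := by
  have hnew : ∀ u ∈ palFactors (w ++ [a]) \ palFactors w,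
      ∀ v ∈ palFactors (w ++ [a]) \ palFactors w, u.length ≤ v.length → u = v := by
    simp only [Finset.mem_sdiff, mem_palFactors, not_and]
    rintro u ⟨⟨hu, hupal⟩, hu'⟩ v ⟨⟨hv, hvpal⟩, hv'⟩ hle
    have husuf := (List.infix_concat_iff.1 hu).resolve_right fun h => hu' h hupal
    have hvsuf := (List.infix_concat_iff.1 hv).resolve_right fun h => hv' h hvpal
    by_contra hne
    exact hu' (infix_of_palindrome_isSuffix_of_ne hupal hvpal
      (List.suffix_of_suffix_length_le husuf hvsuf hle) hne hvsuf) hupal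
  calc (palFactors (w ++ [a])).card
      ≤ (palFactors (w ++ [a]) \ palFactors w).card + (palFactors w).card :=
        Finset.card_le_card_sdiff_add_card
    _ ≤ 1 + (palFactors w).card := by
        gcongr
        refine Finset.card_le_one.2 fun u hu v hv => ?_
        rcases le_total u.length v.length with h | h
        exacts [hnew u hu v hv h, (hnew v hv u hu h).symm]
    _ = (palFactors w).card + 1 := add_comm _ _

theorem card_palFactors_le (w : List α) : (palFactors w).card ≤ w.length + 1 := by
  induction w using List.reverseRecOn with
  | nil => simp [palFactors]
  | append_singleton w a ih =>
    simpa using (card_palFactors_concat_le w a).trans (Nat.add_le_add_right ih 1)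

theorem Rich.of_concat {w : List α} {a : α} (h : Rich (w ++ [a])) : Rich w := by
  have := card_palFactors_concat_le w a
  have := card_palFactors_le w
  simp only [Rich, List.length_append, List.length_singleton] at h ⊢
  omega

theorem Rich.of_prefix {u w : List α} (h : Rich w) (hu : u <+: w) : Rich u := by
  obtain ⟨t, rfl⟩ := hu
  induction t using List.reverseRecOn with
  | nil => simpa using h
  | append_singleton t a ih =>
    exact ih (Rich.of_concat (a := a) (by simpa only [List.append_assoc] using h))

theorem palFactors_reverse (w : List α) : palFactors w.reverse = palFactors w := by
  ext u
  simp only [mem_palFactors, and_congr_left_iff]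
  intro hu
  rw [← List.reverse_infix, List.reverse_reverse, hu]

theorem Rich.reverse {w : List α} (h : Rich w) : Rich w.reverse := by
  rwa [Rich, palFactors_reverse, List.length_reverse]

theorem Rich.of_infix {u w : List α} (h : Rich w) (hu : u <:+: w) : Rich u := by
  obtain ⟨s, t, rfl⟩ := hu
  rw [List.append_assoc] at h
  have hsuf : Rich (u ++ t) := by
    have := h.reverse.of_prefix (List.reverse_prefix.2 (List.suffix_append s (u ++ t)))
    simpa using this.reverse
  exact hsuf.of_prefix (List.prefix_append u t)

/-- Unioccurrence: in a rich word the letter `a` creates a new palindrome, which must be the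
longest palindromic suffix `s`; hence `s` does not occur in `w`. -/
theorem Rich.not_infix_of_isLPS {w s : List α} {a : α} (h : Rich (w ++ [a]))
    (hs : IsLPS (w ++ [a]) s) : ¬ s <:+: w := by
  obtain ⟨-, hspal, hsuf, hmax⟩ := hs
  obtain ⟨u, hu, hu'⟩ : ∃ u ∈ palFactors (w ++ [a]), u ∉ palFactors w := by
    refine Finset.exists_mem_notMem_of_card_lt_card ?_
    have := card_palFactors_le w
    rw [h, List.length_append, List.length_singleton]
    omega
  simp only [mem_palFactors, not_and] at hu hu'
  have husuf := (List.infix_concat_iff.1 hu.1).resolve_right fun h => hu' h hu.2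
  obtain rfl : u = s := by
    by_contra hne
    exact hu' (infix_of_palindrome_isSuffix_of_ne hu.2 hspal
      (List.suffix_of_suffix_length_le husuf hsuf (hmax u husuf hu.2)) hne hsuf) hu.2
  exact fun h => hu' h hu.2

theorem Rich.not_infix_of_isLPS_append {w s : List α} (h : Rich (w ++ s))
    (hs : IsLPS (w ++ s) s) : ¬ s <:+: w := by
  rcases s.eq_nil_or_concat with rfl | ⟨s', a, rfl⟩
  · exact absurd rfl hs.1
  rw [List.concat_eq_append, ← List.append_assoc] at h hs
  rw [List.concat_eq_append]
  exact fun hw => h.not_infix_of_isLPS hs (hw.trans (List.prefix_append w s').isInfix)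

end Palindromes

section UPS

variable {α : Type*}

theorem exists_isLPS {w : List α} (hw : w ≠ []) : ∃ s, IsLPS w s := by
  classical
  obtain ⟨s, hs, hmax⟩ :=
    (w.tails.toFinset.filter fun t => t ≠ [] ∧ t.reverse = t).exists_max_image List.length
      ⟨[w.getLast hw], by simpa using ⟨w.dropLast, List.dropLast_append_getLast hw⟩⟩
  simp only [Finset.mem_filter, List.mem_toFinset, List.mem_tails] at hs hmax
  refine ⟨s, hs.2.1, hs.2.2, hs.1, fun t ht htpal => ?_⟩
  rcases eq_or_ne t [] with rfl | ht0
  · exact Nat.zero_le _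
  · exact hmax t ⟨ht, ht0, htpal⟩

noncomputable def lps (w : List α) : List α :=
  if hw : w = [] then [] else (exists_isLPS hw).choose

theorem isLPS_lps {w : List α} (hw : w ≠ []) : IsLPS w (lps w) := by
  rw [lps, dif_neg hw]
  exact (exists_isLPS hw).choose_spec

theorem take_append_lps (w : List α) : w.take (w.length - (lps w).length) ++ lps w = w := by
  by_cases hw : w = []
  · simp [hw, lps]
  conv_rhs => rw [← List.take_append_drop (w.length - (lps w).length) w]
  rw [← List.suffix_iff_eq_drop.1 (isLPS_lps hw).2.2.1]

noncomputable def upsFac (w : List α) : List (List α) :=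
  if w = [] then [] else upsFac (w.take (w.length - (lps w).length)) ++ [lps w]
termination_by w.length
decreasing_by
  rename_i hw
  have := List.length_pos_iff.2 (isLPS_lps hw).1
  have := List.length_pos_iff.2 hw
  simp only [List.length_take]
  omega

theorem flatten_upsFac (w : List α) : (upsFac w).flatten = w := by
  fun_induction upsFac w with
  | case1 => rfl
  | case2 w _ ih => rw [List.flatten_append, ih, List.flatten_singleton, take_append_lps]

theorem upsFac_ne_nil {w : List α} (hw : w ≠ []) : upsFac w ≠ [] := by
  rw [upsFac, if_neg hw]
  simp

theorem ne_nil_and_reverse_eq_of_mem_upsFac {w s : List α} (hs : s ∈ upsFac w) :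
    s ≠ [] ∧ s.reverse = s := by
  fun_induction upsFac w with
  | case1 => simp at hs
  | case2 w hw ih =>
    rcases List.mem_append.1 hs with hs | hs
    · exact ih hs
    · rw [List.mem_singleton.1 hs]
      exact ⟨(isLPS_lps hw).1, (isLPS_lps hw).2.1⟩

def IsLPSChain (ws : List (List α)) : Prop :=
  ∀ i : Fin ws.length, IsLPS ((ws.take (i + 1)).flatten) ws[i]

theorem IsLPSChain.concat {ws : List (List α)} {s : List α} (h : IsLPSChain ws)
    (hs : IsLPS (ws ++ [s]).flatten s) : IsLPSChain (ws ++ [s]) := by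
  rintro ⟨i, hi⟩
  rw [List.length_append, List.length_singleton] at hi
  rcases Nat.lt_succ_iff_lt_or_eq.1 hi with hi | rfl
  · simpa [List.take_append_of_le_length (Nat.succ_le_of_lt hi), List.getElem_append_left hi]
      using h ⟨i, hi⟩
  · simpa [List.take_of_length_le] using hs

theorem isLPSChain_upsFac (w : List α) : IsLPSChain (upsFac w) := by
  fun_induction upsFac w with
  | case1 => exact fun i => i.elim0
  | case2 w hw ih =>
    refine ih.concat ?_
    rw [List.flatten_append, flatten_upsFac, List.flatten_singleton, take_append_lps]
    exact isLPS_lps hw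

theorem IsLPSChain.pairwise_ne [DecidableEq α] {ws : List (List α)} (h : IsLPSChain ws)
    (hr : Rich ws.flatten) : ws.Pairwise (· ≠ ·) := by
  rw [List.pairwise_iff_getElem]
  intro i j hi hj hij heq
  have htake : (ws.take (j + 1)).flatten = (ws.take j).flatten ++ ws[j] := by
    rw [← List.take_append_getElem hj, List.flatten_append, List.flatten_singleton]
  have hj' : IsLPS ((ws.take j).flatten ++ ws[j]) ws[j] := htake ▸ h ⟨j, hj⟩
  have hrich : Rich ((ws.take j).flatten ++ ws[j]) :=
    hr.of_prefix (htake ▸ (List.take_prefix (j + 1) ws).flatten)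
  refine hrich.not_infix_of_isLPS_append hj' ?_
  rw [← heq]
  exact (h ⟨i, hi⟩).2.2.1.isInfix.trans (List.take_prefix_take_left hij).flatten.isInfix

theorem upsFac_UPS [DecidableEq α] {w : List α} (hw : w ≠ []) (h : Rich w) : UPS w (upsFac w) :=
  ⟨upsFac_ne_nil hw, flatten_upsFac w,
    (isLPSChain_upsFac w).pairwise_ne ((flatten_upsFac w).symm ▸ h), isLPSChain_upsFac w⟩

end UPS

section Counting

def halfRecon {α : Type*} (t : List α) (m : ℕ) : List α :=
  t ++ (t.take (m / 2)).reverse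

theorem halfRecon_take_of_palindrome {α : Type*} {s : List α} (hs : s.reverse = s) :
    halfRecon (s.take ((s.length + 1) / 2)) s.length = s := by
  have hsecond : (s.take (s.length / 2)).reverse = s.drop ((s.length + 1) / 2) := by
    rw [List.reverse_eq_iff, List.reverse_drop, hs, show s.length - (s.length + 1) / 2 =
      s.length / 2 by omega]
  rw [halfRecon, List.take_take, min_eq_left (by omega), hsecond, List.take_append_drop]

variable {q n : ℕ} {P : Finset ℕ}

abbrev HalfCode (q n : ℕ) (P : Finset ℕ) : Type :=
  Σ p : P, Σ f : comps n p, ∀ i, {v : List.Vector (Fin q) ((f.1 i + 1) / 2) // Rich v.toList}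

theorem card_halfCode (q n : ℕ) (P : Finset ℕ) :
    Fintype.card (HalfCode q n P) =
      ∑ p ∈ P, ∑ f ∈ comps n p, ∏ i, richCount q (((f i : ℕ) + 1) / 2) := by
  simp only [Fintype.card_sigma, Fintype.card_pi, richCount]
  rw [← Finset.sum_coe_sort P]
  refine Finset.sum_congr rfl fun p _ => ?_
  rw [← Finset.sum_coe_sort (comps n p)]

def HalfCode.decode (x : HalfCode q n P) : List (Fin q) :=
  (List.ofFn fun i => halfRecon (x.2.2 i).1.toList (x.2.1.1 i)).flatten

def halfCode (ws : List (List (Fin q))) (hrich : Rich ws.flatten) (hlen : ws.flatten.length = n)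
    (hpal : ∀ s ∈ ws, s ≠ [] ∧ s.reverse = s) (hP : ws.length ∈ P) : HalfCode q n P :=
  ⟨⟨ws.length, hP⟩,
    ⟨fun i => ⟨ws[i].length, Nat.lt_succ_of_le
      (hlen ▸ (List.infix_of_mem_flatten (List.getElem_mem _)).length_le)⟩, by
      refine Finset.mem_filter.2 ⟨Finset.mem_univ _, fun i => ?_, ?_⟩
      · exact List.length_pos_iff.2 (hpal _ (List.getElem_mem _)).1
      · show ∑ i : Fin ws.length, ws[(i : ℕ)].length = n
        rw [← hlen, List.length_flatten, Fin.sum_univ_fun_getElem]⟩,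
    fun i => ⟨⟨ws[i].take ((ws[i].length + 1) / 2), by
      rw [List.length_take]
      exact min_eq_left (by omega)⟩,
      hrich.of_infix ((List.take_prefix _ _).isInfix.trans
        (List.infix_of_mem_flatten (List.getElem_mem _)))⟩⟩

theorem decode_halfCode (ws : List (List (Fin q))) (hrich : Rich ws.flatten)
    (hlen : ws.flatten.length = n) (hpal : ∀ s ∈ ws, s ≠ [] ∧ s.reverse = s)
    (hP : ws.length ∈ P) : (halfCode ws hrich hlen hpal hP).decode = ws.flatten := by
  conv_rhs => rw [← List.ofFn_getElem (xs := ws)]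
  exact congrArg List.flatten (List.ofFn_inj.2 (funext fun i =>
    halfRecon_take_of_palindrome (hpal _ (List.getElem_mem _)).2))

theorem richCount_le_of_factorization (fac : List (Fin q) → List (List (Fin q)))
    (flatten_fac : ∀ w, (fac w).flatten = w)
    (mem_fac : ∀ w, ∀ s ∈ fac w, s ≠ [] ∧ s.reverse = s)
    (length_fac_mem : ∀ w, Rich w → w.length = n → (fac w).length ∈ P) :
    richCount q n ≤ ∑ p ∈ P, ∑ f ∈ comps n p, ∏ i, richCount q (((f i : ℕ) + 1) / 2) := by
  rw [← card_halfCode]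
  refine Fintype.card_le_of_injective (fun w => halfCode (fac w.1.toList)
    ((flatten_fac _).symm ▸ w.2) ((flatten_fac _).symm ▸ w.1.toList_length) (mem_fac _)
    (length_fac_mem _ w.2 w.1.toList_length)) fun v w hvw => ?_
  have := congrArg HalfCode.decode hvw
  simp only [decode_halfCode, flatten_fac] at this
  exact Subtype.ext (List.Vector.toList_injective this)

end Counting

theorem stmt_15_general (q : ℕ) (τ : ℕ → ℕ)
    (hτ : ∀ (w : List (Fin q)) (ws : List (List (Fin q))),
      w ≠ [] → Rich w → UPS w ws → ws.length ≤ τ w.length)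
    (n : ℕ) (hn : 2 ≤ n) :
    richCount q n ≤ ∑ p ∈ Finset.Icc 1 (τ n), ∑ f ∈ comps n p,
      ∏ i, richCount q (((f i : ℕ) + 1) / 2) := by
  refine richCount_le_of_factorization upsFac flatten_upsFac
    (fun _ _ => ne_nil_and_reverse_eq_of_mem_upsFac) fun w hw hlen => ?_
  have hw0 : w ≠ [] := by
    rintro rfl
    simp only [List.length_nil] at hlen
    omega
  exact Finset.mem_Icc.2 ⟨List.length_pos_iff.2 (upsFac_ne_nil hw0),
    hlen ▸ hτ w _ hw0 hw (upsFac_UPS hw0 hw)⟩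

/-- if `τ` bounds the UPS-factorization length of rich words, then
`R(n) ≤ ∑_{p=1}^{τ(n)} ∑_{n₁+⋯+n_p=n} R(⌈n₁/2⌉)⋯R(⌈n_p/2⌉)` (for naturals,
`⌈m/2⌉ = (m+1)/2`). -/
theorem stmt_15 (q : ℕ) (hq : 2 ≤ q) (τ : ℕ → ℕ)
    (hτ : ∀ (w : List (Fin q)) (ws : List (List (Fin q))),
      w ≠ [] → Rich w → UPS w ws → ws.length ≤ τ w.length)
    (n : ℕ) (hn : 2 ≤ n) :
    richCount q n ≤ ∑ p ∈ Finset.Icc 1 (τ n), ∑ f ∈ comps n p,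
      ∏ i, richCount q (((f i : ℕ) + 1) / 2) :=
  stmt_15_general q τ hτ n hn
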